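/- arXiv:2105.07470 — 2 statements merged into one kernel-verified Lean document; each statement's English description precedes it below -/
import Mathlib

section
/- For any NFA 𝒜, the backward determinization of 𝒜 is an unambiguous finite automaton and recognizes the same language as 𝒜, i.e., L(𝒜_b) = L(𝒜). -/
/-- A nondeterministic finite automaton with state type `Q` and alphabet `A`:
transition relation `δ`, initial states `I`, accepting states `F`. -/
structure NFA' (Q A : Type) where
  δ : Q → A → Q → Prop
  I : Set Q
  F : Set Q

namespace NFA'

variable {Q A : Type}

/-- `M.Steps q w q'` holds iff there is a run from `q` to `q'` reading the word `w`. -/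
def Steps (M : NFA' Q A) : Q → List A → Q → Prop
  | q, [], q' => q = q'
  | q, a :: w, q' => ∃ p, M.δ q a p ∧ M.Steps p w q'

/-- An accepting run for the word `w`, given as the sequence of visited states. -/
def IsAccRun (M : NFA' Q A) (w : List A) (r : Fin (w.length + 1) → Q) : Prop :=
  r 0 ∈ M.I ∧ r (Fin.last w.length) ∈ M.F ∧
    ∀ i : Fin w.length, M.δ (r i.castSucc) (w.get i) (r i.succ)

/-- The language recognized by `M`: words with at least one accepting run. -/
def Lang (M : NFA' Q A) : Set (List A) :=
  {w | ∃ r, M.IsAccRun w r}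

/-- `M` is unambiguous (a UFA) if every word has at most one accepting run. -/
def Unambiguous (M : NFA' Q A) : Prop :=
  ∀ (w : List A) (r r' : Fin (w.length + 1) → Q),
    M.IsAccRun w r → M.IsAccRun w r' → r = r'

/-- The state set `{δ(I,w) | w ∈ Σ*}` of the forward determinization of `M`. -/
def fwdStates (M : NFA' Q A) : Set (Set Q) :=
  {S | ∃ w : List A, S = {r | ∃ q ∈ M.I, M.Steps q w r}}

/-- The state set `{δ⁻¹(w,F) | w ∈ Σ*}` of the backward determinization of `M`. -/
def bwdStates (M : NFA' Q A) : Set (Set Q) :=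
  {S | ∃ w : List A, S = {r | ∃ q ∈ M.F, M.Steps r w q}}

end NFA'

/-- The backward determinization of `M`: states are the sets `δ⁻¹(w,F)`, with
transitions `δ⁻¹(a,S) →_a S`, initial states those intersecting `I`, and unique
accepting state `F`. -/
def NFA'.bwdDet {Q A : Type} (M : NFA' Q A) : NFA' {S : Set Q // S ∈ M.bwdStates} A where
  δ := fun S a S' => S.1 = {r | ∃ q ∈ S'.1, M.δ r a q}
  I := {S | (S.1 ∩ M.I).Nonempty}
  F := {S | S.1 = M.F}

namespace NFA'

variable {Q A : Type} (M : NFA' Q A)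

lemma steps_append (w u : List A) (q q'' : Q) :
    M.Steps q (w ++ u) q'' ↔ ∃ p, M.Steps q w p ∧ M.Steps p u q'' := by
  induction w generalizing q with
  | nil => simp [Steps]
  | cons a w ih =>
    constructor
    · rintro ⟨p, hp, hs⟩
      obtain ⟨m, h1, h2⟩ := (ih p).mp hs
      exact ⟨m, ⟨p, hp, h1⟩, h2⟩
    · rintro ⟨m, ⟨p, hp, h1⟩, h2⟩
      exact ⟨p, hp, (ih p).mpr ⟨m, h1, h2⟩⟩

/-- Preimage of a set of states under a word. -/
def pre (w : List A) (T : Set Q) : Set Q := {r | ∃ q ∈ T, M.Steps r w q}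

lemma pre_nil (T : Set Q) : M.pre [] T = T := by
  ext r; simp [pre, Steps]

lemma pre_cons (a : A) (w : List A) (T : Set Q) :
    M.pre (a :: w) T = {r | ∃ q ∈ M.pre w T, M.δ r a q} := by
  ext r
  simp only [pre, Steps, Set.mem_setOf_eq]
  tauto

lemma pre_append (w u : List A) (T : Set Q) :
    M.pre (w ++ u) T = M.pre w (M.pre u T) := by
  ext r
  simp only [pre, Set.mem_setOf_eq, steps_append]
  tauto

lemma mem_bwdStates_iff (S : Set Q) : S ∈ M.bwdStates ↔ ∃ w, S = M.pre w M.F :=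
  Iff.rfl

lemma steps_of_run (w : List A) (r : Fin (w.length + 1) → Q)
    (h : ∀ i : Fin w.length, M.δ (r i.castSucc) (w.get i) (r i.succ)) :
    M.Steps (r 0) w (r (Fin.last w.length)) := by
  induction w with
  | nil => rfl
  | cons a w ih =>
    have key := ih (fun i => r i.succ) (fun i => by
      have hi := h i.succ
      have e1 : (i.succ.castSucc : Fin (w.length + 2)) = i.castSucc.succ := by
        ext; simp
      rw [e1] at hi
      simpa using hi)
    have h0 := h (⟨0, Nat.succ_pos _⟩ : Fin (w.length + 1))
    refine ⟨r (⟨0, Nat.succ_pos _⟩ : Fin (w.length + 1)).succ, ?_, ?_⟩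
    · have e : ((⟨0, Nat.succ_pos _⟩ : Fin (w.length + 1)).castSucc)
          = (0 : Fin ((a :: w).length + 1)) := by ext; simp
      rw [e] at h0
      exact h0
    · have e2 : ((0 : Fin (w.length + 1)).succ : Fin (w.length + 2))
          = (⟨0, Nat.succ_pos _⟩ : Fin (w.length + 1)).succ := by ext; simp
      have e3 : ((Fin.last w.length).succ : Fin (w.length + 2))
          = Fin.last ((a :: w).length) := by ext; simp
      rw [e2, e3] at key
      exact key

lemma exists_run_of_steps (w : List A) (q q' : Q) (h : M.Steps q w q') :
    ∃ r : Fin (w.length + 1) → Q, r 0 = q ∧ r (Fin.last w.length) = q' ∧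
      ∀ i : Fin w.length, M.δ (r i.castSucc) (w.get i) (r i.succ) := by
  induction w generalizing q with
  | nil => exact ⟨fun _ => q, rfl, h ▸ rfl, fun i => i.elim0⟩
  | cons a w ih =>
    obtain ⟨p, hp, hs⟩ := h
    obtain ⟨r, h0, hl, ht⟩ := ih p hs
    refine ⟨fun i => if hi : i.val = 0 then q else r ⟨i.val - 1, by have := i.isLt; simp only [List.length_cons] at this; omega⟩, ?_, ?_, ?_⟩
    · simp
    · simp only [Fin.val_last, List.length_cons, Nat.add_sub_cancel,
        Nat.succ_ne_zero, dite_false]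
      exact hl
    · rintro ⟨iv, hiv⟩
      cases iv with
      | zero =>
        simpa [Fin.ext_iff, h0] using hp
      | succ j =>
        have hj : j < w.length := by
          have := hiv; simp at this; omega
        have := ht ⟨j, hj⟩
        simpa [Fin.ext_iff, Fin.castSucc, Fin.castAdd, Fin.castLE, Fin.succ] using this

lemma lang_iff (w : List A) :
    w ∈ M.Lang ↔ ∃ q ∈ M.I, ∃ q' ∈ M.F, M.Steps q w q' := by
  constructor
  · rintro ⟨r, h0, hl, ht⟩
    exact ⟨r 0, h0, r (Fin.last w.length), hl, M.steps_of_run w r ht⟩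
  · rintro ⟨q, hq, q', hq', hs⟩
    obtain ⟨r, h0, hl, ht⟩ := M.exists_run_of_steps w q q' hs
    exact ⟨r, h0 ▸ hq, hl ▸ hq', ht⟩

lemma steps_bwdDet (w : List A) (S S' : {S : Set Q // S ∈ M.bwdStates}) :
    M.bwdDet.Steps S w S' ↔ S.1 = M.pre w S'.1 := by
  induction w generalizing S with
  | nil =>
    rw [pre_nil]
    exact Subtype.ext_iff
  | cons a w ih =>
    constructor
    · rintro ⟨P, hP, hs⟩
      rw [ih] at hs
      rw [pre_cons, ← hs]
      exact hP
    · intro h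
      obtain ⟨u, hu⟩ := S'.2
      have hu' : S'.1 = M.pre u M.F := hu
      have hmem : M.pre w S'.1 ∈ M.bwdStates := ⟨w ++ u, by
        show M.pre w S'.1 = M.pre (w ++ u) M.F
        rw [pre_append, ← hu']⟩
      refine ⟨⟨M.pre w S'.1, hmem⟩, ?_, ?_⟩
      · show S.1 = _
        rw [h, pre_cons]
      · rw [ih]

end NFA'

/-- The backward determinization of any NFA is unambiguous and recognizes
the same language. -/
theorem bwdDet_unambiguous_lang {Q A : Type} [Fintype Q] [Fintype A] (M : NFA' Q A) :
    M.bwdDet.Unambiguous ∧ M.bwdDet.Lang = M.Lang := by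
  constructor
  · intro w r r' hr hr'
    funext i
    induction i using Fin.reverseInduction with
    | last =>
      apply Subtype.ext
      rw [hr.2.1, hr'.2.1]
    | cast i ih =>
      apply Subtype.ext
      have h1 := hr.2.2 i
      have h2 := hr'.2.2 i
      show (r i.castSucc).1 = (r' i.castSucc).1
      rw [h1, h2, ih]
  · ext w
    rw [M.bwdDet.lang_iff, M.lang_iff]
    constructor
    · rintro ⟨S, hS, S', hS', hs⟩
      rw [M.steps_bwdDet] at hs
      obtain ⟨q, ⟨hq1, hq2⟩⟩ := hS
      rw [hs] at hq1
      obtain ⟨f, hf, hsteps⟩ := hq1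
      rw [hS'] at hf
      exact ⟨q, hq2, f, hf, hsteps⟩
    · rintro ⟨q, hq, f, hf, hs⟩
      refine ⟨⟨M.pre w M.F, ⟨w, rfl⟩⟩, ⟨q, ⟨f, hf, hs⟩, hq⟩, ⟨M.F, ⟨[], (M.pre_nil M.F).symm⟩⟩, rfl, ?_⟩
      rw [M.steps_bwdDet]
end

section
/- Let 𝒜 = (Q,Σ,δ,I,F) be a UFA, and let G = (Q,E) be the graph with E := { {q,q'} ⊆ Q | q ≠ q' and there exist q_0, q_0' ∈ I and a word w ∈ Σ* with runs q_0 →^w q and q_0' →^w q' }. Then every state Y ⊆ Q of the backward determinization of 𝒜 (i.e., every set of the form δ^{−1}(w,F) for a word w) is a coclique in G. -/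
/-- The graph on the states of `M` where `q` and `q'` are adjacent iff they are
distinct and reachable from initial states via the same word. -/
def NFA'.reachGraph {Q A : Type} (M : NFA' Q A) : SimpleGraph Q where
  Adj q q' := q ≠ q' ∧ ∃ (w : List A) (q₀ q₀' : Q),
    q₀ ∈ M.I ∧ q₀' ∈ M.I ∧ M.Steps q₀ w q ∧ M.Steps q₀' w q'
  symm := by
    constructor
    rintro q q' ⟨hne, w, q₀, q₀', h₀, h₀', hs, hs'⟩
    exact ⟨hne.symm, w, q₀', q₀, h₀', h₀, hs', hs⟩
  loopless := ⟨fun q h => h.1 rfl⟩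

namespace NFA'

variable {Q A : Type} (M : NFA' Q A)

def IsRun (w : List A) (r : Fin (w.length + 1) → Q) : Prop :=
  ∀ i : Fin w.length, M.δ (r i.castSucc) (w.get i) (r i.succ)

lemma isRun_cons {a : A} {w : List A} {q : Q} {r : Fin (w.length + 1) → Q} :
    M.IsRun (a :: w) (Fin.cons q r) ↔ M.δ q a (r 0) ∧ M.IsRun w r := by
  refine ⟨fun h => ⟨h 0, fun i => h i.succ⟩, fun ⟨h₀, h⟩ i => ?_⟩
  cases i using Fin.cases with
  | zero => exact h₀
  | succ i => exact h i

lemma exists_isRun_of_steps {w : List A} {q q' : Q} (h : M.Steps q w q') :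
    ∃ r : Fin (w.length + 1) → Q, r 0 = q ∧ r (Fin.last _) = q' ∧ M.IsRun w r := by
  induction w generalizing q with
  | nil => exact ⟨fun _ => q, rfl, h, fun i => i.elim0⟩
  | cons a w ih =>
    obtain ⟨p, hqp, hp⟩ := h
    obtain ⟨r, hr₀, hr, hrun⟩ := ih hp
    exact ⟨Fin.cons q r, rfl, hr, M.isRun_cons.2 ⟨hr₀ ▸ hqp, hrun⟩⟩

lemma exists_isRun_append_of_steps {x w : List A} {q u q' : Q}
    (hx : M.Steps q x u) (hw : M.Steps u w q') :
    ∃ r : Fin ((x ++ w).length + 1) → Q, r 0 = q ∧ r (Fin.last _) = q' ∧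
      M.IsRun (x ++ w) r ∧ r ⟨x.length, by simp⟩ = u := by
  induction x generalizing q with
  | nil =>
    obtain ⟨r, hr₀, hr, hrun⟩ := M.exists_isRun_of_steps hw
    exact ⟨r, hr₀.trans hx.symm, hr, hrun, hr₀⟩
  | cons a x ih =>
    obtain ⟨p, hqp, hp⟩ := hx
    obtain ⟨r, hr₀, hr, hrun, hru⟩ := ih hp
    exact ⟨Fin.cons q r, rfl, hr, M.isRun_cons.2 ⟨hr₀ ▸ hqp, hrun⟩, hru⟩

variable {M} in
lemma Unambiguous.eq_of_steps (hM : M.Unambiguous) {x w : List A} {q₀ q₀' u v qf qf' : Q}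
    (h₀ : q₀ ∈ M.I) (h₀' : q₀' ∈ M.I) (hu : M.Steps q₀ x u) (hv : M.Steps q₀' x v)
    (huf : M.Steps u w qf) (hvf : M.Steps v w qf') (hf : qf ∈ M.F) (hf' : qf' ∈ M.F) :
    u = v := by
  obtain ⟨r, hr₀, hr, hrun, hru⟩ := M.exists_isRun_append_of_steps hu huf
  obtain ⟨r', hr₀', hr', hrun', hrv⟩ := M.exists_isRun_append_of_steps hv hvf
  have hrr' := hM (x ++ w) r r' ⟨hr₀ ▸ h₀, hr ▸ hf, hrun⟩ ⟨hr₀' ▸ h₀', hr' ▸ hf', hrun'⟩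
  rw [← hru, ← hrv, hrr']

end NFA'

theorem bwd_state_coclique_general {Q A : Type}
    (M : NFA' Q A) (hM : M.Unambiguous) (w : List A) :
    Set.Pairwise {r : Q | ∃ q ∈ M.F, M.Steps r w q}
      (fun u v => ¬ M.reachGraph.Adj u v) := by
  rintro u ⟨qf, hf, huf⟩ v ⟨qf', hf', hvf⟩ hne ⟨-, x, q₀, q₀', h₀, h₀', hu, hv⟩
  exact hne (hM.eq_of_steps h₀ h₀' hu hv huf hvf hf hf')

/-- For a UFA `M`, every state `δ⁻¹(w,F)` of the backward determinization of `M`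
is a coclique in the graph `M.reachGraph`. -/
theorem bwd_state_coclique {Q A : Type} [Fintype Q] [Fintype A]
    (M : NFA' Q A) (hM : M.Unambiguous) (w : List A) :
    Set.Pairwise {r : Q | ∃ q ∈ M.F, M.Steps r w q}
      (fun u v => ¬ M.reachGraph.Adj u v) :=
  bwd_state_coclique_general M hM w
end
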